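/- Let d ≥ 1, let A > 0 and e be real constants, and let s = 1 or s = −1. Let c : ℝ×ℝ^d → ℝ be C² with c > 0 everywhere, ψ : ℝ×ℝ^d → ℝ be C² in space, and u : ℝ×ℝ^d → ℝ^d be C¹. Assume pointwise ∂ₜc + div(cu) = div( A∇c + s·A e c∇ψ ). Then at every point of ℝ×ℝ^d: 2∂ₜ(√(1+c)) = −div( (c/√(1+c))·u ) − (c/(1+c))^{3/2} u·∇(√c) + div( A·√(c/(1+c))·( 2∇(√c) + s·e√c·∇ψ ) ) + 2A·(c/(1+c)^{3/2})·|∇(√c)|² + s·A e·(c/(1+c))^{3/2}·∇ψ·∇(√c). -/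

import Mathlib

open MeasureTheory

/-- Spatial partial derivative in direction `i` of `g : ℝ^d → ℝ` at `x`. -/
noncomputable def pd (d : ℕ) (i : Fin d) (g : (Fin d → ℝ) → ℝ) (x : Fin d → ℝ) : ℝ :=
  fderiv ℝ g x (Pi.single i 1)

private lemma pd_eq {d : ℕ} {i : Fin d} {g : (Fin d → ℝ) → ℝ} {x : Fin d → ℝ}
    {L : (Fin d → ℝ) →L[ℝ] ℝ} (h : HasFDerivAt g L x) :
    pd d i g x = L (Pi.single i 1) := by
  rw [pd, h.fderiv]

private lemma pd_add {d : ℕ} {i : Fin d} {f g : (Fin d → ℝ) → ℝ} {x : Fin d → ℝ}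
    (hf : DifferentiableAt ℝ f x) (hg : DifferentiableAt ℝ g x) :
    pd d i (fun y => f y + g y) x = pd d i f x + pd d i g x := by
  rw [pd_eq (g := fun y => f y + g y) (hf.hasFDerivAt.add hg.hasFDerivAt)]; simp [pd]

private lemma pd_const_mul {d : ℕ} {i : Fin d} {f : (Fin d → ℝ) → ℝ} {x : Fin d → ℝ}
    (k : ℝ) (hf : DifferentiableAt ℝ f x) :
    pd d i (fun y => k * f y) x = k * pd d i f x := by
  rw [pd_eq (hf.hasFDerivAt.const_mul k)]; simp [pd]

private lemma pd_const_add {d : ℕ} {i : Fin d} {f : (Fin d → ℝ) → ℝ} {x : Fin d → ℝ}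
    (k : ℝ) (hf : DifferentiableAt ℝ f x) :
    pd d i (fun y => k + f y) x = pd d i f x := by
  rw [pd_eq (hf.hasFDerivAt.const_add k)]; rfl

private lemma pd_mul {d : ℕ} {i : Fin d} {f g : (Fin d → ℝ) → ℝ} {x : Fin d → ℝ}
    (hf : DifferentiableAt ℝ f x) (hg : DifferentiableAt ℝ g x) :
    pd d i (fun y => f y * g y) x = pd d i f x * g x + f x * pd d i g x := by
  rw [pd_eq (g := fun y => f y * g y) (hf.hasFDerivAt.mul hg.hasFDerivAt)]; simp [pd]; ring

private lemma pd_sqrt {d : ℕ} {i : Fin d} {f : (Fin d → ℝ) → ℝ} {x : Fin d → ℝ}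
    (hf : DifferentiableAt ℝ f x) (hx : f x ≠ 0) :
    pd d i (fun y => Real.sqrt (f y)) x = pd d i f x / (2 * Real.sqrt (f x)) := by
  rw [pd_eq (hf.hasFDerivAt.sqrt hx)]; simp [pd]; ring

private lemma pd_inv {d : ℕ} {i : Fin d} {f : (Fin d → ℝ) → ℝ} {x : Fin d → ℝ}
    (hf : DifferentiableAt ℝ f x) (hx : f x ≠ 0) :
    pd d i (fun y => (f y)⁻¹) x = -(pd d i f x) / f x ^ 2 := by
  have h : HasFDerivAt (fun y => (f y)⁻¹) ((-(f x ^ 2)⁻¹) • fderiv ℝ f x) x :=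
    (hasDerivAt_inv hx).comp_hasFDerivAt x hf.hasFDerivAt
  rw [pd_eq h]; simp [pd]; ring

private lemma pd_div {d : ℕ} {i : Fin d} {f g : (Fin d → ℝ) → ℝ} {x : Fin d → ℝ}
    (hf : DifferentiableAt ℝ f x) (hg : DifferentiableAt ℝ g x) (hx : g x ≠ 0) :
    pd d i (fun y => f y / g y) x = (pd d i f x * g x - f x * pd d i g x) / g x ^ 2 := by
  have h : (fun y => f y / g y) = fun y => f y * (g y)⁻¹ := funext fun y => div_eq_mul_inv _ _
  rw [h, pd_mul (g := fun y => (g y)⁻¹) hf (hg.inv hx), pd_inv hg hx]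
  field_simp
  ring

set_option maxHeartbeats 1000000 in
/-- the equation satisfied by `√(1+c)` for a concentration `c`
solving a Nernst–Planck equation with sign `s = ±1` for the electrostatic drift. -/
theorem stmt16 (d : ℕ) (hd : 1 ≤ d) (A e s : ℝ) (hA : 0 < A)
    (hs : s = 1 ∨ s = -1)
    (c : ℝ → (Fin d → ℝ) → ℝ) (ψ : ℝ → (Fin d → ℝ) → ℝ)
    (u : ℝ → (Fin d → ℝ) → Fin d → ℝ)
    (hc : ContDiff ℝ 2 (fun q : ℝ × (Fin d → ℝ) => c q.1 q.2))
    (hcpos : ∀ t x, 0 < c t x)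
    (hψ : ∀ t, ContDiff ℝ 2 (ψ t))
    (hu : ContDiff ℝ 1 (fun q : ℝ × (Fin d → ℝ) => u q.1 q.2))
    (heq : ∀ t x,
      deriv (fun τ => c τ x) t + ∑ j, pd d j (fun y => c t y * u t y j) x
        = ∑ j, pd d j (fun y =>
            A * pd d j (c t) y + s * A * e * c t y * pd d j (ψ t) y) x) :
    ∀ t x,
      2 * deriv (fun τ => Real.sqrt (1 + c τ x)) t
        = -(∑ j, pd d j (fun y => c t y / Real.sqrt (1 + c t y) * u t y j) x)
          - (c t x / (1 + c t x)) ^ ((3 : ℝ) / 2) *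
              (∑ j, u t x j * pd d j (fun y => Real.sqrt (c t y)) x)
          + (∑ j, pd d j (fun y =>
              A * Real.sqrt (c t y / (1 + c t y)) *
                (2 * pd d j (fun z => Real.sqrt (c t z)) y
                  + s * e * Real.sqrt (c t y) * pd d j (ψ t) y)) x)
          + 2 * A * (c t x / (1 + c t x) ^ ((3 : ℝ) / 2)) *
              (∑ j, (pd d j (fun y => Real.sqrt (c t y)) x) ^ 2)
          + s * A * e * (c t x / (1 + c t x)) ^ ((3 : ℝ) / 2) *
              (∑ j, pd d j (ψ t) x * pd d j (fun y => Real.sqrt (c t y)) x) := by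
  intro t x
  -- regularity in the space variable
  have hf2 : ContDiff ℝ 2 (c t) :=
    hc.comp ((contDiff_const : ContDiff ℝ 2 fun _ : (Fin d → ℝ) => t).prodMk contDiff_id)
  have hψ2 : ContDiff ℝ 2 (ψ t) := hψ t
  have hfd : ∀ y, DifferentiableAt ℝ (c t) y :=
    fun y => (hf2.differentiable two_ne_zero).differentiableAt
  have hψd : ∀ y, DifferentiableAt ℝ (ψ t) y :=
    fun y => (hψ2.differentiable two_ne_zero).differentiableAt
  have hu1 : ∀ j : Fin d, DifferentiableAt ℝ (fun y => u t y j) x := by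
    intro j
    have h1 : ContDiff ℝ 1 (fun y : Fin d → ℝ => u t y) :=
      hu.comp ((contDiff_const : ContDiff ℝ 1 fun _ : (Fin d → ℝ) => t).prodMk contDiff_id)
    exact ((contDiff_pi.mp h1 j).differentiable one_ne_zero).differentiableAt
  have hPf : ∀ j : Fin d, DifferentiableAt ℝ (fun y => pd d j (c t) y) x := fun j =>
    ((((hf2.fderiv_right (by norm_num)).clm_apply contDiff_const).differentiable
      one_ne_zero).differentiableAt :
      DifferentiableAt ℝ (fun y => fderiv ℝ (c t) y (Pi.single j 1)) x)
  have hPψ : ∀ j : Fin d, DifferentiableAt ℝ (fun y => pd d j (ψ t) y) x := fun j =>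
    ((((hψ2.fderiv_right (by norm_num)).clm_apply contDiff_const).differentiable
      one_ne_zero).differentiableAt :
      DifferentiableAt ℝ (fun y => fderiv ℝ (ψ t) y (Pi.single j 1)) x)
  -- positivity
  have hpos : ∀ y, 0 < c t y := hcpos t
  have h1pos : ∀ y : Fin d → ℝ, 0 < 1 + c t y := fun y => by linarith [hpos y]
  have hSpos : 0 < Real.sqrt (1 + c t x) := Real.sqrt_pos.mpr (h1pos x)
  have hScpos : 0 < Real.sqrt (c t x) := Real.sqrt_pos.mpr (hpos x)
  -- gradient of √c, everywhere
  have hsq : ∀ (j : Fin d) (y), pd d j (fun z => Real.sqrt (c t z)) y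
      = pd d j (c t) y / (2 * Real.sqrt (c t y)) :=
    fun j y => pd_sqrt (hfd y) (ne_of_gt (hpos y))
  -- differentiability of auxiliary functions at x
  have hsq1d : DifferentiableAt ℝ (fun y => Real.sqrt (1 + c t y)) x :=
    (((hfd x).const_add 1).hasFDerivAt.sqrt (ne_of_gt (h1pos x))).differentiableAt
  have hdivd : DifferentiableAt ℝ (fun y => c t y / Real.sqrt (1 + c t y)) x :=
    by
      have h : (fun y => c t y / Real.sqrt (1 + c t y))
          = fun y => c t y * (Real.sqrt (1 + c t y))⁻¹ := funext fun y => div_eq_mul_inv _ _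
      rw [h]
      exact (hfd x).mul (hsq1d.inv (ne_of_gt hSpos))
  -- the time derivative
  have hct : DifferentiableAt ℝ (fun τ => c τ x) t :=
    (((hc.differentiable two_ne_zero).comp
      (differentiable_id.prodMk (differentiable_const x))).differentiableAt :
      DifferentiableAt ℝ (fun τ => c τ x) t)
  have hLHS : deriv (fun τ => Real.sqrt (1 + c τ x)) t
      = deriv (fun τ => c τ x) t / (2 * Real.sqrt (1 + c t x)) :=
    ((hct.hasDerivAt.const_add 1).sqrt (ne_of_gt (h1pos x))).deriv
  -- expansion of the first divergence sum
  have hT1 : ∀ j : Fin d, pd d j (fun y => c t y / Real.sqrt (1 + c t y) * u t y j) x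
      = (1 / Real.sqrt (1 + c t x)
          - c t x / (2 * Real.sqrt (1 + c t x) ^ 3)) * (pd d j (c t) x * u t x j)
        + (c t x / Real.sqrt (1 + c t x)) * pd d j (fun y => u t y j) x := by
    intro j
    rw [pd_mul hdivd (hu1 j), pd_div (hfd x) hsq1d (ne_of_gt hSpos),
      pd_sqrt ((hfd x).const_add 1) (ne_of_gt (h1pos x)), pd_const_add 1 (hfd x)]
    have h2 : Real.sqrt (1 + c t x) ^ 2 = 1 + c t x := Real.sq_sqrt (h1pos x).le
    field_simp
  -- pointwise rewriting of the diffusive flux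
  have hT3fun : ∀ j : Fin d,
      (fun y => A * Real.sqrt (c t y / (1 + c t y)) *
          (2 * pd d j (fun z => Real.sqrt (c t z)) y
            + s * e * Real.sqrt (c t y) * pd d j (ψ t) y))
      = fun y => (A * pd d j (c t) y + (s * A * e) * (c t y * pd d j (ψ t) y))
          * (Real.sqrt (1 + c t y))⁻¹ := by
    intro j; funext y
    rw [hsq j y, Real.sqrt_div (hpos y).le]
    have h1 : Real.sqrt (c t y) ≠ 0 := ne_of_gt (Real.sqrt_pos.mpr (hpos y))
    have h2 : Real.sqrt (1 + c t y) ≠ 0 := ne_of_gt (Real.sqrt_pos.mpr (h1pos y))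
    have h3 : Real.sqrt (c t y) ^ 2 = c t y := Real.sq_sqrt (hpos y).le
    field_simp
    linear_combination (s * e * pd d j (ψ t) y) * h3
  -- expansion of the diffusive divergence sum
  have hT3 : ∀ j : Fin d,
      pd d j (fun y => A * Real.sqrt (c t y / (1 + c t y)) *
          (2 * pd d j (fun z => Real.sqrt (c t z)) y
            + s * e * Real.sqrt (c t y) * pd d j (ψ t) y)) x
      = (A / Real.sqrt (1 + c t x)) * pd d j (fun y => pd d j (c t) y) x
        + (s * A * e / Real.sqrt (1 + c t x)
            - s * A * e * c t x / (2 * Real.sqrt (1 + c t x) ^ 3)) *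
              (pd d j (c t) x * pd d j (ψ t) x)
        + (s * A * e * c t x / Real.sqrt (1 + c t x)) * pd d j (fun y => pd d j (ψ t) y) x
        - (A / (2 * Real.sqrt (1 + c t x) ^ 3)) * pd d j (c t) x ^ 2 := by
    intro j
    rw [hT3fun j]
    have hF : DifferentiableAt ℝ
        (fun y => A * pd d j (c t) y + (s * A * e) * (c t y * pd d j (ψ t) y)) x :=
      ((hPf j).const_mul A).add (((hfd x).mul (hPψ j)).const_mul (s * A * e))
    have hI : DifferentiableAt ℝ (fun y => (Real.sqrt (1 + c t y))⁻¹) x :=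
      hsq1d.inv (ne_of_gt hSpos)
    rw [pd_mul hF hI, pd_inv hsq1d (ne_of_gt hSpos),
      pd_sqrt ((hfd x).const_add 1) (ne_of_gt (h1pos x)), pd_const_add 1 (hfd x),
      pd_add (g := fun y => (s * A * e) * (c t y * pd d j (ψ t) y)) ((hPf j).const_mul A) (((hfd x).mul (hPψ j)).const_mul (s * A * e)),
      pd_const_mul A (hPf j), pd_const_mul (f := fun y => c t y * pd d j (ψ t) y) (s * A * e) ((hfd x).mul (hPψ j)),
      pd_mul (hfd x) (hPψ j)]
    field_simp
    ring
  -- expansions for the hypothesis equation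
  have hL : ∀ j : Fin d, pd d j (fun y => c t y * u t y j) x
      = pd d j (c t) x * u t x j + c t x * pd d j (fun y => u t y j) x :=
    fun j => pd_mul (hfd x) (hu1 j)
  have hR : ∀ j : Fin d,
      pd d j (fun y => A * pd d j (c t) y + s * A * e * c t y * pd d j (ψ t) y) x
      = A * pd d j (fun y => pd d j (c t) y) x
        + (s * A * e) * (pd d j (c t) x * pd d j (ψ t) x)
        + (s * A * e * c t x) * pd d j (fun y => pd d j (ψ t) y) x := by
    intro j
    have hfe : (fun y => A * pd d j (c t) y + s * A * e * c t y * pd d j (ψ t) y)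
        = fun y => A * pd d j (c t) y + (s * A * e) * (c t y * pd d j (ψ t) y) :=
      funext fun y => by ring
    rw [hfe, pd_add (g := fun y => (s * A * e) * (c t y * pd d j (ψ t) y)) ((hPf j).const_mul A) (((hfd x).mul (hPψ j)).const_mul (s * A * e)),
      pd_const_mul A (hPf j), pd_const_mul (f := fun y => c t y * pd d j (ψ t) y) (s * A * e) ((hfd x).mul (hPψ j)),
      pd_mul (hfd x) (hPψ j)]
    ring
  have hmrel : deriv (fun τ => c τ x) t
      + ((∑ j, pd d j (c t) x * u t x j)
          + c t x * ∑ j, pd d j (fun y => u t y j) x)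
      = A * (∑ j, pd d j (fun y => pd d j (c t) y) x)
        + (s * A * e) * (∑ j, pd d j (c t) x * pd d j (ψ t) x)
        + (s * A * e * c t x) * (∑ j, pd d j (fun y => pd d j (ψ t) y) x) := by
    have h := heq t x
    rw [Finset.sum_congr rfl (fun j _ => hL j), Finset.sum_congr rfl (fun j _ => hR j)] at h
    simp only [Finset.sum_add_distrib, ← Finset.mul_sum] at h
    linarith [h]
  -- the three sums involving ∇√c
  have eT2 : (∑ j, u t x j * pd d j (fun y => Real.sqrt (c t y)) x)
      = (1 / (2 * Real.sqrt (c t x))) * ∑ j, pd d j (c t) x * u t x j := by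
    rw [Finset.mul_sum]
    exact Finset.sum_congr rfl fun j _ => by rw [hsq]; ring
  have eT4 : (∑ j, (pd d j (fun y => Real.sqrt (c t y)) x) ^ 2)
      = (1 / (2 * Real.sqrt (c t x))) ^ 2 * ∑ j, pd d j (c t) x ^ 2 := by
    rw [Finset.mul_sum]
    exact Finset.sum_congr rfl fun j _ => by rw [hsq]; ring
  have eT5 : (∑ j, pd d j (ψ t) x * pd d j (fun y => Real.sqrt (c t y)) x)
      = (1 / (2 * Real.sqrt (c t x))) * ∑ j, pd d j (c t) x * pd d j (ψ t) x := by
    rw [Finset.mul_sum]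
    exact Finset.sum_congr rfl fun j _ => by rw [hsq]; ring
  -- the rpow terms
  have hr2 : (1 + c t x) ^ ((3 : ℝ) / 2) = Real.sqrt (1 + c t x) ^ 3 := by
    rw [show ((3 : ℝ) / 2) = (1 / 2) * (3 : ℝ) by norm_num, Real.rpow_mul (h1pos x).le,
      show ((3 : ℝ)) = ((3 : ℕ) : ℝ) by norm_num, Real.rpow_natCast, ← Real.sqrt_eq_rpow]
  have hr1 : (c t x / (1 + c t x)) ^ ((3 : ℝ) / 2)
      = Real.sqrt (c t x) ^ 3 / Real.sqrt (1 + c t x) ^ 3 := by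
    have h0 : (0 : ℝ) ≤ c t x / (1 + c t x) := div_nonneg (hpos x).le (h1pos x).le
    rw [show ((3 : ℝ) / 2) = (1 / 2) * (3 : ℝ) by norm_num, Real.rpow_mul h0,
      show ((3 : ℝ)) = ((3 : ℕ) : ℝ) by norm_num, Real.rpow_natCast, ← Real.sqrt_eq_rpow,
      Real.sqrt_div (hpos x).le, div_pow]
  -- assemble
  have hS2 : Real.sqrt (1 + c t x) ^ 2 = 1 + c t x := Real.sq_sqrt (h1pos x).le
  have hSc2 : Real.sqrt (c t x) ^ 2 = c t x := Real.sq_sqrt (hpos x).le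
  rw [hLHS, Finset.sum_congr rfl (fun j _ => hT1 j), Finset.sum_congr rfl (fun j _ => hT3 j),
    eT2, eT4, eT5, hr1, hr2]
  simp only [Finset.sum_add_distrib, Finset.sum_sub_distrib, ← Finset.mul_sum]
  set S := Real.sqrt (1 + c t x) with hSdef
  set Sc := Real.sqrt (c t x) with hScdef
  set a := c t x with hadef
  rw [← hSc2] at hmrel ⊢
  have hmv : deriv (fun τ => c τ x) t
      = A * (∑ j, pd d j (fun y => pd d j (c t) y) x)
        + (s * A * e) * (∑ j, pd d j (c t) x * pd d j (ψ t) x)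
        + (s * A * e * Sc ^ 2) * (∑ j, pd d j (fun y => pd d j (ψ t) y) x)
        - (∑ j, pd d j (c t) x * u t x j)
        - Sc ^ 2 * ∑ j, pd d j (fun y => u t y j) x := by
    linarith [hmrel]
  rw [hmv]
  field_simp
  ring
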